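/- arXiv:1905.09529 — 4 statements merged into one kernel-verified Lean document; each statement's English description precedes it below -/
import Mathlib

section
/- Let φ be a Schwartz function on ℝ. Then the Fourier transform of the absolute value |φ| is integrable on ℝ. More precisely, writing N for the (discrete) set of points s where φ(s) = 0 and φ'(s) ≠ 0, one has ∑_{s ∈ N} |φ'(s)| ≤ ∫_ℝ |φ''(s)| ds < ∞, and |(ℱ|φ|)(ξ)| ≲ |ξ|^{-2} for large |ξ|. -/
/-!
By Rolle's theorem there is a zero of `φ'` strictly between any two zeros of `φ`. Hence each
zero `s` of `φ` can pay for `|φ' s| = |∫ φ''|` with `|φ''|` on an interval that runs from `s` to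
the next zero of `φ'` (or to `+∞`). These intervals are disjoint, so `∑ |φ' s| ≤ ∫ |φ''|`.

For the decay of `𝓕|φ|`, let `Δ` be the symmetric second difference with step `δ = 1 / (2ξ)`.
Translating by `±δ` multiplies `𝓕|φ|(ξ)` by `-1`, so `4 ‖𝓕|φ|(ξ)‖ ≤ ∫ |Δ|φ||`. Now `∫ Δ|φ| = 0`,
and by the triangle inequality the negative part of `Δ|φ|` is at most `|Δφ|`. This gives
`∫ |Δ|φ|| ≤ 2 ∫ |Δφ| = O(δ²) = O(ξ⁻²)`. Since `𝓕|φ|` is also continuous, it is integrable.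
-/

open MeasureTheory Set Filter Topology FourierTransform Real
open scoped SchwartzMap

section ZerosOfDeriv

open Function

variable {f g g' : ℝ → ℝ}

theorem abs_le_setIntegral_Ioc_abs_of_hasDerivAt (hg : ∀ x, HasDerivAt g (g' x) x) {s c : ℝ}
    (hg' : IntervalIntegrable g' volume s c) (hsc : s ≤ c) (hc : g c = 0) :
    |g s| ≤ ∫ x in Ioc s c, |g' x| := by
  have hftc : ∫ x in s..c, g' x = g c - g s :=
    intervalIntegral.integral_eq_sub_of_hasDerivAt (fun x _ => hg x) hg'
  calc |g s| = |∫ x in s..c, g' x| := by rw [hftc, hc, zero_sub, abs_neg]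
    _ ≤ ∫ x in s..c, |g' x| := intervalIntegral.abs_integral_le_integral_abs hsc
    _ = ∫ x in Ioc s c, |g' x| := intervalIntegral.integral_of_le hsc

theorem abs_le_setIntegral_Ioi_abs_of_hasDerivAt (hg : ∀ x, HasDerivAt g (g' x) x) {s : ℝ}
    (hg' : IntegrableOn g' (Ioi s)) (hg_top : Tendsto g atTop (𝓝 0)) :
    |g s| ≤ ∫ x in Ioi s, |g' x| := by
  have hftc := integral_Ioi_of_hasDerivAt_of_tendsto' (fun x _ => hg x) hg' hg_top
  calc |g s| = |∫ x in Ioi s, g' x| := by rw [hftc, zero_sub, abs_neg]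
    _ ≤ ∫ x in Ioi s, |g' x| := abs_integral_le_integral_abs

theorem exists_abs_le_setIntegral_abs_before_next_zero (hf : ∀ x, HasDerivAt f (g x) x)
    (hg : ∀ x, HasDerivAt g (g' x) x) (hg' : Integrable g') (hg_top : Tendsto g atTop (𝓝 0))
    {S : Finset ℝ} (hS : ∀ s ∈ S, f s = 0) {s : ℝ} (hs : s ∈ S) :
    ∃ U : Set ℝ, MeasurableSet U ∧ U ⊆ Ioi s ∧ (∀ t ∈ S, s < t → U ⊆ Iio t) ∧
      |g s| ≤ ∫ x in U, |g' x| := by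
  by_cases hnext : ∃ t ∈ S, s < t
  · have hT : (S.filter (s < ·)).Nonempty := by simpa [Finset.Nonempty] using hnext
    set t := (S.filter (s < ·)).min' hT
    obtain ⟨htS, hst⟩ := Finset.mem_filter.1 ((S.filter (s < ·)).min'_mem hT)
    have hf_cont : Continuous f := continuous_iff_continuousAt.2 fun x => (hf x).continuousAt
    obtain ⟨c, hc, hgc⟩ := exists_hasDerivAt_eq_zero hst hf_cont.continuousOn
      ((hS s hs).trans (hS t htS).symm) fun x _ => hf x
    refine ⟨Ioc s c, measurableSet_Ioc, Ioc_subset_Ioi_self, fun t' ht' hst' => ?_,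
      abs_le_setIntegral_Ioc_abs_of_hasDerivAt hg hg'.intervalIntegrable hc.1.le hgc⟩
    have htt' : t ≤ t' := Finset.min'_le _ _ (Finset.mem_filter.2 ⟨ht', hst'⟩)
    exact fun x hx => hx.2.trans_lt (hc.2.trans_le htt')
  · push Not at hnext
    exact ⟨Ioi s, measurableSet_Ioi, subset_rfl,
      fun t ht hst => absurd hst (not_lt.2 (hnext t ht)),
      abs_le_setIntegral_Ioi_abs_of_hasDerivAt hg hg'.integrableOn hg_top⟩

theorem sum_abs_le_integral_abs_of_hasDerivAt (hf : ∀ x, HasDerivAt f (g x) x)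
    (hg : ∀ x, HasDerivAt g (g' x) x) (hg' : Integrable g') (hg_top : Tendsto g atTop (𝓝 0))
    (S : Finset ℝ) (hS : ∀ s ∈ S, f s = 0) :
    ∑ s ∈ S, |g s| ≤ ∫ x, |g' x| := by
  choose! U hUm hUs hUt hU using fun s (hs : s ∈ S) =>
    exists_abs_le_setIntegral_abs_before_next_zero hf hg hg' hg_top hS hs
  have hdisj : (S : Set ℝ).Pairwise (Disjoint on U) := by
    intro s hs t ht hst
    rcases hst.lt_or_gt with h | h
    · exact disjoint_left.2 fun x hxs hxt =>
        (mem_Iio.1 (hUt s hs t ht h hxs)).not_gt (hUs t ht hxt)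
    · exact disjoint_left.2 fun x hxs hxt =>
        (mem_Iio.1 (hUt t ht s hs h hxt)).not_gt (hUs s hs hxs)
  calc ∑ s ∈ S, |g s| ≤ ∑ s ∈ S, ∫ x in U s, |g' x| := Finset.sum_le_sum hU
    _ = ∫ x in ⋃ s ∈ S, U s, |g' x| :=
      (integral_biUnion_finset S hUm hdisj fun _ _ => hg'.abs.integrableOn).symm
    _ ≤ ∫ x, |g' x| := setIntegral_le_integral hg'.abs (ae_of_all _ fun _ => abs_nonneg _)

theorem tsum_abs_le_integral_abs_of_hasDerivAt (hf : ∀ x, HasDerivAt f (g x) x)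
    (hg : ∀ x, HasDerivAt g (g' x) x) (hg' : Integrable g') (hg_top : Tendsto g atTop (𝓝 0))
    (p : ℝ → Prop) (hp : ∀ s, p s → f s = 0) :
    ∑' s : {s // p s}, |g s| ≤ ∫ x, |g' x| := by
  refine tsum_le_of_sum_le' (integral_nonneg fun _ => abs_nonneg _) fun F => ?_
  have := sum_abs_le_integral_abs_of_hasDerivAt hf hg hg' hg_top (F.map (Embedding.subtype p))
    fun s hs => by obtain ⟨s, -, rfl⟩ := Finset.mem_map.1 hs; exact hp s s.2
  rwa [Finset.sum_map] at this

end ZerosOfDeriv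

def secondDiff {E : Type*} [AddCommGroup E] (f : ℝ → E) (δ x : ℝ) : E :=
  (f (x + δ) - f x) - (f x - f (x - δ))

section SecondDiff

variable {E : Type*} [NormedAddCommGroup E]

theorem MeasureTheory.Integrable.secondDiff {f : ℝ → E} (hf : Integrable f) (δ : ℝ) :
    Integrable (secondDiff f δ) :=
  ((hf.comp_add_right δ).sub hf).sub (hf.sub (hf.comp_sub_right δ))

theorem integral_secondDiff [NormedSpace ℝ E] {f : ℝ → E} (hf : Integrable f) (δ : ℝ) :
    ∫ x, secondDiff f δ x = 0 := by
  have h₁ : Integrable fun x => f (x + δ) - f x := (hf.comp_add_right δ).sub hf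
  have h₂ : Integrable fun x => f x - f (x - δ) := hf.sub (hf.comp_sub_right δ)
  simp only [secondDiff]
  rw [integral_sub h₁ h₂, integral_sub (hf.comp_add_right δ) hf,
    integral_sub hf (hf.comp_sub_right δ), integral_add_right_eq_self f δ,
    integral_sub_right_eq_self f δ, sub_self]

end SecondDiff

theorem abs_secondDiff_abs_le (f : ℝ → ℝ) (δ x : ℝ) :
    |secondDiff (|f ·|) δ x| ≤ secondDiff (|f ·|) δ x + 2 * |secondDiff f δ x| := by
  simp only [secondDiff]
  have h₂ : |2 * f x| ≤ |f (x + δ) + f (x - δ)| + |(f (x + δ) - f x) - (f x - f (x - δ))| := by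
    rw [show 2 * f x = (f (x + δ) + f (x - δ)) - ((f (x + δ) - f x) - (f x - f (x - δ))) by ring]
    exact abs_sub _ _
  have h₁ := abs_add_le (f (x + δ)) (f (x - δ))
  rw [abs_mul, abs_two] at h₂
  exact abs_le.2 ⟨by linarith, by linarith [abs_nonneg ((f (x + δ) - f x) - (f x - f (x - δ)))]⟩

theorem integral_abs_secondDiff_abs_le {f : ℝ → ℝ} (hf : Integrable f) (δ : ℝ) :
    ∫ x, |secondDiff (|f ·|) δ x| ≤ 2 * ∫ x, |secondDiff f δ x| := by
  have hf_abs : Integrable (|f ·|) := hf.abs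
  calc ∫ x, |secondDiff (|f ·|) δ x|
      ≤ ∫ x, (secondDiff (|f ·|) δ x + 2 * |secondDiff f δ x|) :=
        integral_mono (hf_abs.secondDiff δ).abs
          ((hf_abs.secondDiff δ).add ((hf.secondDiff δ).abs.const_mul 2))
          (abs_secondDiff_abs_le f δ)
    _ = 2 * ∫ x, |secondDiff f δ x| := by
      rw [integral_add (hf_abs.secondDiff δ) ((hf.secondDiff δ).abs.const_mul 2),
        integral_secondDiff hf_abs, integral_const_mul, zero_add]

theorem abs_secondDiff_le_of_hasDerivAt {f f' f'' : ℝ → ℝ} (hf : ∀ x, HasDerivAt f (f' x) x)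
    (hf' : ∀ x, HasDerivAt f' (f'' x) x) {δ x M : ℝ}
    (hM : ∀ y ∈ Icc (x - |δ|) (x + |δ|), |f'' y| ≤ M) :
    |secondDiff f δ x| ≤ M * δ ^ 2 := by
  have hlip : ∀ p ∈ Icc (x - |δ|) (x + |δ|), ∀ q ∈ Icc (x - |δ|) (x + |δ|),
      |f' p - f' q| ≤ M * |p - q| := fun p hp q hq =>
    (convex_Icc _ _).norm_image_sub_le_of_norm_hasDerivWithin_le
      (fun y _ => (hf' y).hasDerivWithinAt) hM hq hp
  have hderiv : ∀ t ∈ uIcc 0 δ, HasDerivWithinAt (fun t => f (x + t) - f (x - δ + t))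
      (f' (x + t) - f' (x - δ + t)) (uIcc 0 δ) t := fun t _ =>
    (((hf _).comp_const_add x t).sub ((hf _).comp_const_add (x - δ) t)).hasDerivWithinAt
  have hbound : ∀ t ∈ uIcc 0 δ, ‖f' (x + t) - f' (x - δ + t)‖ ≤ M * |δ| := by
    intro t ht
    have h₁ : |t| ≤ |δ| := by simpa using abs_sub_left_of_mem_uIcc ht
    have h₂ : |δ - t| ≤ |δ| := by simpa using abs_sub_right_of_mem_uIcc ht
    have hmem₁ : x + t ∈ Icc (x - |δ|) (x + |δ|) := by
      constructor <;> linarith [abs_le.1 h₁]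
    have hmem₂ : x - δ + t ∈ Icc (x - |δ|) (x + |δ|) := by
      constructor <;> linarith [abs_le.1 h₂]
    simpa using hlip _ hmem₁ _ hmem₂
  have hmvt := (convex_uIcc 0 δ).norm_image_sub_le_of_norm_hasDerivWithin_le hderiv hbound
    left_mem_uIcc right_mem_uIcc
  calc |secondDiff f δ x| = ‖(f (x + δ) - f (x - δ + δ)) - (f (x + 0) - f (x - δ + 0))‖ := by
        rw [secondDiff, Real.norm_eq_abs, sub_add_cancel, add_zero, add_zero]
    _ ≤ M * |δ| * ‖δ - 0‖ := hmvt
    _ = M * δ ^ 2 := by rw [sub_zero, Real.norm_eq_abs, mul_assoc, abs_mul_abs_self, sq]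

theorem inv_one_add_sq_le_three_mul {x y : ℝ} (h : |y - x| ≤ 1) :
    (1 + y ^ 2)⁻¹ ≤ 3 * (1 + x ^ 2)⁻¹ := by
  rw [← div_eq_mul_inv, inv_eq_one_div, div_le_div_iff₀ (by positivity) (by positivity)]
  nlinarith [abs_le.1 h, sq_nonneg (x - 2 * y)]

namespace SchwartzMap

variable {F : Type*} [NormedAddCommGroup F] [NormedSpace ℝ F]

theorem norm_le_mul_inv_one_add_sq (g : 𝓢(ℝ, F)) (x : ℝ) :
    ‖g x‖ ≤ (SchwartzMap.seminorm ℝ 0 0 g + SchwartzMap.seminorm ℝ 2 0 g) * (1 + x ^ 2)⁻¹ := by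
  have h₀ := norm_le_seminorm ℝ g x
  have h₂ := norm_pow_mul_le_seminorm ℝ g 2 x
  rw [Real.norm_eq_abs, sq_abs] at h₂
  rw [← div_eq_mul_inv, le_div_iff₀ (by positivity)]
  linarith

theorem exists_integral_abs_secondDiff_le (φ : 𝓢(ℝ, ℝ)) :
    ∃ K, ∀ δ, |δ| ≤ 1 → ∫ x, |secondDiff φ δ x| ≤ K * δ ^ 2 := by
  set ψ := derivCLM ℝ ℝ (derivCLM ℝ ℝ φ)
  set C := SchwartzMap.seminorm ℝ 0 0 ψ + SchwartzMap.seminorm ℝ 2 0 ψ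
  refine ⟨3 * C * π, fun δ hδ => ?_⟩
  have hpt : ∀ x, |secondDiff φ δ x| ≤ 3 * C * (1 + x ^ 2)⁻¹ * δ ^ 2 := fun x =>
    abs_secondDiff_le_of_hasDerivAt φ.hasDerivAt (derivCLM ℝ ℝ φ).hasDerivAt fun y hy => by
      have hyx : |y - x| ≤ 1 :=
        (abs_sub_le_iff.2 ⟨by linarith [hy.2], by linarith [hy.1]⟩).trans hδ
      calc |ψ y| ≤ C * (1 + y ^ 2)⁻¹ := ψ.norm_le_mul_inv_one_add_sq y
        _ ≤ C * (3 * (1 + x ^ 2)⁻¹) := by gcongr; exact inv_one_add_sq_le_three_mul hyx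
        _ = 3 * C * (1 + x ^ 2)⁻¹ := by ring
  calc ∫ x, |secondDiff φ δ x| ≤ ∫ x, 3 * C * (1 + x ^ 2)⁻¹ * δ ^ 2 :=
        integral_mono (φ.integrable.secondDiff δ).abs
          ((integrable_inv_one_add_sq.const_mul _).mul_const _) hpt
    _ = 3 * C * π * δ ^ 2 := by
      rw [integral_mul_const, integral_const_mul, integral_univ_inv_one_add_sq]

end SchwartzMap

section Fourier

variable {E : Type*} [NormedAddCommGroup E] [NormedSpace ℂ E]

theorem fourier_comp_add_right_apply (f : ℝ → E) (c ξ : ℝ) :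
    𝓕 (fun x => f (x + c)) ξ = 𝐞 (c * ξ) • 𝓕 f ξ :=
  (congrFun (VectorFourier.fourierIntegral_comp_add_right 𝐞 volume (innerₗ ℝ) f c) ξ).trans
    (by rw [mul_comm]; rfl)

theorem fourierChar_eq_neg_one {t : ℝ} (ht : t = 1 / 2 ∨ t = -(1 / 2)) : (𝐞 t : ℂ) = -1 := by
  have hπ : Complex.exp (↑(2 * π * (1 / 2)) * Complex.I) = -1 := by
    rw [show (↑(2 * π * (1 / 2)) * Complex.I : ℂ) = π * Complex.I by push_cast; ring,
      Complex.exp_pi_mul_I]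
  rcases ht with rfl | rfl
  · rw [Real.fourierChar_apply, hπ]
  · rw [Real.fourierChar_apply, mul_neg, Complex.ofReal_neg, neg_mul, Complex.exp_neg, hπ]
    norm_num

theorem fourier_secondDiff_inv_two_mul {f : ℝ → E} (hf : Integrable f) {ξ : ℝ} (hξ : ξ ≠ 0) :
    𝓕 (secondDiff f (2 * ξ)⁻¹) ξ = (-4 : ℂ) • 𝓕 f ξ := by
  have hshift : ∀ c, c * ξ = 1 / 2 ∨ c * ξ = -(1 / 2) → 𝓕 (fun x => f (x + c)) ξ = -𝓕 f ξ :=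
    fun c hc => by
      rw [fourier_comp_add_right_apply, Circle.smul_def, fourierChar_eq_neg_one hc, neg_one_smul]
  have hint : ∀ {g : ℝ → E}, Integrable g → Integrable (fun v => 𝐞 (-(v * ξ)) • g v) :=
    fun hg => by simpa [mul_comm] using (Real.fourierIntegral_convergent_iff ξ).2 hg
  have hδ : (2 * ξ)⁻¹ * ξ = 1 / 2 := by field_simp
  have hright := hshift (2 * ξ)⁻¹ (.inl hδ)
  have hleft := hshift (-(2 * ξ)⁻¹) (.inr (by rw [neg_mul, hδ]))
  simp only [Real.fourier_real_eq, ← sub_eq_add_neg] at hright hleft ⊢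
  simp only [secondDiff, smul_sub]
  have hI₀ := hint hf
  have hI_add := hint (hf.comp_add_right (2 * ξ)⁻¹)
  have hI_sub := hint (hf.comp_sub_right (2 * ξ)⁻¹)
  have h₁ : Integrable fun v => 𝐞 (-(v * ξ)) • f (v + (2 * ξ)⁻¹) - 𝐞 (-(v * ξ)) • f v :=
    hI_add.sub hI₀
  have h₂ : Integrable fun v => 𝐞 (-(v * ξ)) • f v - 𝐞 (-(v * ξ)) • f (v - (2 * ξ)⁻¹) :=
    hI₀.sub hI_sub
  rw [integral_sub h₁ h₂, integral_sub hI_add hI₀, integral_sub hI₀ hI_sub, hright, hleft]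
  module

theorem norm_fourier_le_integral_norm_secondDiff {f : ℝ → E} (hf : Integrable f) {ξ : ℝ}
    (hξ : ξ ≠ 0) : ‖𝓕 f ξ‖ ≤ (∫ x, ‖secondDiff f (2 * ξ)⁻¹ x‖) / 4 := by
  have h : ‖𝓕 (secondDiff f (2 * ξ)⁻¹) ξ‖ ≤ ∫ x, ‖secondDiff f (2 * ξ)⁻¹ x‖ :=
    VectorFourier.norm_fourierIntegral_le_integral_norm 𝐞 volume (innerₗ ℝ) _ ξ
  rw [fourier_secondDiff_inv_two_mul hf hξ, norm_smul, norm_neg, Complex.norm_ofNat] at h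
  linarith

end Fourier

theorem integrable_of_norm_le_div_sq {E : Type*} [NormedAddCommGroup E] {g : ℝ → E}
    (hg : Continuous g) {C R : ℝ} (h : ∀ ξ, R ≤ |ξ| → ‖g ξ‖ ≤ C / ξ ^ 2) : Integrable g := by
  refine hg.locallyIntegrable.integrable_of_isBigO_cocompact
    (Asymptotics.IsBigO.of_bound (2 * |C|) ?_) (integrable_inv_one_add_sq.integrableAtFilter _)
  filter_upwards [tendsto_norm_cocompact_atTop.eventually_ge_atTop (max R 1)] with ξ hξ
  rw [Real.norm_eq_abs, max_le_iff] at hξ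
  have hξ2 : 1 ≤ ξ ^ 2 := by nlinarith [sq_abs ξ, hξ.2]
  calc ‖g ξ‖ ≤ C / ξ ^ 2 := h ξ hξ.1
    _ ≤ |C| / ξ ^ 2 := by gcongr; exact le_abs_self C
    _ ≤ 2 * |C| * ‖(1 + ξ ^ 2)⁻¹‖ := by
      rw [Real.norm_of_nonneg (by positivity), ← div_eq_mul_inv,
        div_le_div_iff₀ (by positivity) (by positivity)]
      nlinarith [abs_nonneg C]

theorem SchwartzMap.exists_norm_fourier_abs_le (φ : 𝓢(ℝ, ℝ)) :
    ∃ C, 0 < C ∧ ∀ ξ, 1 / 2 ≤ |ξ| → ‖𝓕 (fun x => ((|φ x| : ℝ) : ℂ)) ξ‖ ≤ C / ξ ^ 2 := by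
  obtain ⟨K, hK⟩ := φ.exists_integral_abs_secondDiff_le
  refine ⟨max K 1 / 8, by positivity, fun ξ hξ => ?_⟩
  have hξ0 : ξ ≠ 0 := by rintro rfl; norm_num at hξ
  have hδ : |(2 * ξ)⁻¹| ≤ 1 := by
    rw [abs_inv, abs_mul, abs_two]
    exact inv_le_one_of_one_le₀ (by linarith)
  have hnorm : ∀ x, ‖secondDiff (fun x => ((|φ x| : ℝ) : ℂ)) (2 * ξ)⁻¹ x‖ =
      |secondDiff (|φ ·|) (2 * ξ)⁻¹ x| := fun x => by
    simp only [secondDiff, ← Complex.ofReal_sub, Complex.norm_real, Real.norm_eq_abs]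
  calc ‖𝓕 (fun x => ((|φ x| : ℝ) : ℂ)) ξ‖
      ≤ (∫ x, ‖secondDiff (fun x => ((|φ x| : ℝ) : ℂ)) (2 * ξ)⁻¹ x‖) / 4 :=
        norm_fourier_le_integral_norm_secondDiff φ.integrable.abs.ofReal hξ0
    _ = (∫ x, |secondDiff (|φ ·|) (2 * ξ)⁻¹ x|) / 4 := by simp_rw [hnorm]
    _ ≤ 2 * (K * ((2 * ξ)⁻¹) ^ 2) / 4 := by
        gcongr
        exact (integral_abs_secondDiff_abs_le φ.integrable _).trans (by gcongr; exact hK _ hδ)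
    _ = K / 8 / ξ ^ 2 := by field_simp; ring
    _ ≤ max K 1 / 8 / ξ ^ 2 := by gcongr; exact le_max_left K 1

/-- For a Schwartz function `φ` on `ℝ`, the Fourier transform of `|φ|` is integrable;
moreover `∑_{s ∈ N} |φ'(s)| ≤ ∫ |φ''| < ∞` where `N` is the set of zeros of `φ` with
nonvanishing derivative, and `|ℱ|φ|(ξ)| ≲ |ξ|⁻²` for large `|ξ|`. -/
theorem stmt_0 (φ : SchwartzMap ℝ ℝ) :
    Integrable (FourierTransform.fourier (fun x : ℝ => ((|φ x| : ℝ) : ℂ))) volume ∧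
    Integrable (fun s : ℝ => deriv (deriv (⇑φ)) s) volume ∧
    (∑' s : {s : ℝ // φ s = 0 ∧ deriv (⇑φ) s ≠ 0}, |deriv (⇑φ) (s : ℝ)|) ≤
      (∫ s : ℝ, |deriv (deriv (⇑φ)) s|) ∧
    (∃ C R : ℝ, 0 < C ∧ ∀ ξ : ℝ, R ≤ |ξ| →
      ‖FourierTransform.fourier (fun x : ℝ => ((|φ x| : ℝ) : ℂ)) ξ‖ ≤ C / ξ ^ 2) := by
  obtain ⟨C, hC, hdecay⟩ := φ.exists_norm_fourier_abs_le
  set φ' := SchwartzMap.derivCLM ℝ ℝ φ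
  have hφ'' : Integrable (deriv φ') := (SchwartzMap.derivCLM ℝ ℝ φ').integrable
  have hcont : Continuous (𝓕 fun x => ((|φ x| : ℝ) : ℂ)) :=
    VectorFourier.fourierIntegral_continuous continuous_fourierChar continuous_inner
      φ.integrable.abs.ofReal
  refine ⟨integrable_of_norm_le_div_sq hcont hdecay, hφ'', ?_, C, 1 / 2, hC, hdecay⟩
  exact tsum_abs_le_integral_abs_of_hasDerivAt φ.hasDerivAt φ'.hasDerivAt hφ''
    (φ'.tendsto_cocompact.mono_left atTop_le_cocompact) _ fun _ hs => hs.1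
end

section
/- One-parameter oscillatory sum bound: Let Q = ∏_{k=1}^n [-R_k, R_k] be a compact cube in ℝ^n, let α, β¹, …, βⁿ be nonzero reals, H a C¹ function on a neighbourhood of Q, a_1, …, a_n nonzero reals, and M a positive integer. Define F(t) = ∑_{l=0}^M 2^{iαlt} (H·χ_Q)(2^{β¹l} a_1, …, 2^{βⁿl} a_n). Then there is a constant C depending only on Q, α and the β^k's (not on H, the a_k's, M, or t) with |F(t)| ≤ C ‖H‖_{C¹(Q)} / |2^{iαt} − 1| for all real t. -/
open MeasureTheory

/-- The cube `Q = ∏ [-R k, R k]` in `ℝⁿ`. -/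
def cube (n : ℕ) (R : Fin n → ℝ) : Set (Fin n → ℝ) :=
  Set.univ.pi fun k => Set.Icc (-R k) (R k)

lemma aux_geom {ρ Rk : ℝ} (hρ0 : 0 ≤ ρ) (hρ1 : ρ < 1) (hRk : 0 ≤ Rk)
    (S : Finset ℕ) (ψ : ℕ → ℕ) (hinj : ∀ i ∈ S, ∀ j ∈ S, ψ i = ψ j → i = j)
    (g : ℕ → ℝ) (hg : ∀ i ∈ S, g i ≤ Rk * ρ ^ (ψ i)) :
    ∑ i ∈ S, g i ≤ Rk * (1 - ρ)⁻¹ := by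
  calc ∑ i ∈ S, g i ≤ ∑ i ∈ S, Rk * ρ ^ ψ i := Finset.sum_le_sum hg
    _ = Rk * ∑ i ∈ S, ρ ^ ψ i := by rw [Finset.mul_sum]
    _ ≤ Rk * (1 - ρ)⁻¹ := by
        refine mul_le_mul_of_nonneg_left ?_ hRk
        rw [← Finset.sum_image (f := fun j => ρ ^ j) (g := ψ) hinj]
        calc ∑ j ∈ S.image ψ, ρ ^ j
            ≤ ∑' j : ℕ, ρ ^ j := Summable.sum_le_tsum _ (fun j _ => pow_nonneg hρ0 j)
              (summable_geometric_of_lt_one hρ0 hρ1)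
          _ = (1 - ρ)⁻¹ := tsum_geometric_of_lt_one hρ0 hρ1

lemma aux_k {b Rk c : ℝ} (hb : b ≠ 0) (hRk : 0 ≤ Rk)
    (S : Finset ℕ) (h : ∀ i ∈ S, c * (2:ℝ) ^ (b * i) ≤ Rk) :
    ∑ i ∈ S, c * (2:ℝ) ^ (b * i) ≤ Rk * (1 - (2:ℝ) ^ (-|b|))⁻¹ := by
  have hρ0 : (0:ℝ) ≤ (2:ℝ) ^ (-|b|) := (Real.rpow_pos_of_pos two_pos _).le
  have hρ1 : (2:ℝ) ^ (-|b|) < 1 :=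
    Real.rpow_lt_one_of_one_lt_of_neg one_lt_two (neg_lt_zero.mpr (abs_pos.mpr hb))
  rcases S.eq_empty_or_nonempty with rfl | hS
  · simp only [Finset.sum_empty]
    exact mul_nonneg hRk (inv_nonneg.2 (by linarith))
  rcases hb.lt_or_gt with hneg | hpos
  · -- b < 0 : use min'
    set m := S.min' hS with hm
    refine aux_geom hρ0 hρ1 hRk S (fun i => i - m) ?_ _ ?_
    · intro i hi j hj hij
      have h1 := S.min'_le i hi; have h2 := S.min'_le j hj
      omega
    · intro i hi
      have him : m ≤ i := S.min'_le i hi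
      have key : ((2:ℝ) ^ (-|b|)) ^ (i - m) = (2:ℝ) ^ (b * i - b * m) := by
        rw [← Real.rpow_natCast ((2:ℝ) ^ (-|b|)), ← Real.rpow_mul (by norm_num)]
        congr 1
        rw [Nat.cast_sub him, abs_of_neg hneg]; ring
      have : c * (2:ℝ) ^ (b * i) = (c * (2:ℝ) ^ (b * m)) * (2:ℝ) ^ (b * i - b * m) := by
        rw [mul_assoc, ← Real.rpow_add two_pos]; ring_nf
      rw [this, key]
      exact mul_le_mul_of_nonneg_right (h m (S.min'_mem hS))
        (Real.rpow_pos_of_pos two_pos _).le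
  · -- b > 0 : use max'
    set m := S.max' hS with hm
    refine aux_geom hρ0 hρ1 hRk S (fun i => m - i) ?_ _ ?_
    · intro i hi j hj hij
      have h1 := S.le_max' i hi; have h2 := S.le_max' j hj
      omega
    · intro i hi
      have him : i ≤ m := S.le_max' i hi
      have key : ((2:ℝ) ^ (-|b|)) ^ (m - i) = (2:ℝ) ^ (b * i - b * m) := by
        rw [← Real.rpow_natCast ((2:ℝ) ^ (-|b|)), ← Real.rpow_mul (by norm_num)]
        congr 1
        rw [Nat.cast_sub him, abs_of_pos hpos]; ring
      have : c * (2:ℝ) ^ (b * i) = (c * (2:ℝ) ^ (b * m)) * (2:ℝ) ^ (b * i - b * m) := by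
        rw [mul_assoc, ← Real.rpow_add two_pos]; ring_nf
      rw [this, key]
      exact mul_le_mul_of_nonneg_right (h m (S.max'_mem hS))
        (Real.rpow_pos_of_pos two_pos _).le

lemma aux_interval {n : ℕ} (R β a : Fin n → ℝ) (i l j : ℕ) (hil : i ≤ l) (hlj : l ≤ j)
    (hi : (fun k => (2:ℝ) ^ (β k * (i:ℝ)) * a k) ∈ cube n R)
    (hj : (fun k => (2:ℝ) ^ (β k * (j:ℝ)) * a k) ∈ cube n R) :
    (fun k => (2:ℝ) ^ (β k * (l:ℝ)) * a k) ∈ cube n R := by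
  simp only [cube, Set.mem_univ_pi, Set.mem_Icc, ← abs_le] at hi hj ⊢
  intro k
  have hi' := hi k; have hj' := hj k
  have e : ∀ m : ℕ, |(2:ℝ) ^ (β k * (m:ℝ)) * a k| = (2:ℝ) ^ (β k * (m:ℝ)) * |a k| :=
    fun m => by rw [abs_mul, abs_of_pos (Real.rpow_pos_of_pos two_pos _)]
  rw [e] at hi' hj' ⊢
  have hilR : (i:ℝ) ≤ (l:ℝ) := Nat.cast_le.mpr hil
  have hljR : (l:ℝ) ≤ (j:ℝ) := Nat.cast_le.mpr hlj
  rcases le_or_gt (β k) 0 with hb | hb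
  · refine le_trans ?_ hi'
    have hexp : β k * (l:ℝ) ≤ β k * (i:ℝ) := by nlinarith
    exact mul_le_mul_of_nonneg_right
      (Real.rpow_le_rpow_of_exponent_le one_le_two hexp) (abs_nonneg _)
  · refine le_trans ?_ hj'
    have hexp : β k * (l:ℝ) ≤ β k * (j:ℝ) := by nlinarith
    exact mul_le_mul_of_nonneg_right
      (Real.rpow_le_rpow_of_exponent_le one_le_two hexp) (abs_nonneg _)

/-- One-parameter oscillatory sum bound: for
`F(t) = ∑_{l=0}^M 2^{iαlt} (H χ_Q)(2^{β¹l}a₁, …, 2^{βⁿl}aₙ)`,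
one has `|F(t)| ≤ C ‖H‖_{C¹(Q)} / |2^{iαt} − 1|` with `C = C(Q, α, β)`. -/
theorem stmt_3 (n : ℕ) (R : Fin n → ℝ) (hR : ∀ k, 0 < R k)
    (α : ℝ) (hα : α ≠ 0) (β : Fin n → ℝ) (hβ : ∀ k, β k ≠ 0) :
    ∃ C : ℝ, 0 < C ∧
      ∀ (H : (Fin n → ℝ) → ℂ) (U : Set (Fin n → ℝ)),
        IsOpen U → cube n R ⊆ U → ContDiffOn ℝ 1 H U →
        ∀ KH : ℝ,
          (∀ x ∈ cube n R, ‖H x‖ ≤ KH ∧ ‖fderiv ℝ H x‖ ≤ KH) →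
          ∀ a : Fin n → ℝ, (∀ k, a k ≠ 0) →
            ∀ M : ℕ, 0 < M → ∀ t : ℝ,
              ‖∑ l ∈ Finset.range (M + 1),
                  (2 : ℂ) ^ (Complex.I * ((α * (l : ℝ) * t : ℝ) : ℂ)) *
                    Set.indicator (cube n R) H
                      (fun k => (2 : ℝ) ^ (β k * (l : ℝ)) * a k)‖ *
                ‖(2 : ℂ) ^ (Complex.I * ((α * t : ℝ) : ℂ)) - 1‖ ≤ C * KH := by
  classical
  set V : ℝ := ∑ k, |(2:ℝ) ^ (β k) - 1| * (R k * (1 - (2:ℝ) ^ (-|β k|))⁻¹) with hV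
  have hρk : ∀ k : Fin n, (0:ℝ) < 1 - (2:ℝ) ^ (-|β k|) := fun k => by
    have := Real.rpow_lt_one_of_one_lt_of_neg one_lt_two (neg_lt_zero.mpr (abs_pos.mpr (hβ k)))
    linarith
  have hVnn : 0 ≤ V := Finset.sum_nonneg fun k _ =>
    mul_nonneg (abs_nonneg _) (mul_nonneg (hR k).le (inv_nonneg.2 (hρk k).le))
  refine ⟨2 * (3 + V), by linarith, ?_⟩
  intro H U hU hsub hH KH hKH a ha M hM t
  have h0cube : (fun _ : Fin n => (0:ℝ)) ∈ cube n R := by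
    simp only [cube, Set.mem_univ_pi, Set.mem_Icc]
    intro k
    constructor
    · linarith [hR k]
    · exact (hR k).le
  have hKH0 : 0 ≤ KH := le_trans (norm_nonneg _) (hKH _ h0cube).1
  set z : ℂ := (2:ℂ) ^ (Complex.I * ((α * t : ℝ) : ℂ)) with hz
  have hznorm : ‖z‖ = 1 := by
    rw [hz, show ((2:ℂ)) = ((2:ℝ):ℂ) by norm_num, Complex.norm_cpow_eq_rpow_re_of_pos two_pos]
    simp
  set x : ℕ → Fin n → ℝ := fun l k => (2:ℝ) ^ (β k * (l:ℝ)) * a k with hxdef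
  set f : ℕ → ℂ := fun l => Set.indicator (cube n R) H (x l) with hfdef
  have hgeom : ∀ m : ℕ, ‖z ^ m - 1‖ ≤ 2 := fun m => by
    calc ‖z ^ m - 1‖ ≤ ‖z ^ m‖ + ‖(1:ℂ)‖ := norm_sub_le _ _
      _ = 2 := by rw [norm_pow, hznorm, norm_one, one_pow]; norm_num
  have hfbound : ∀ l, ‖f l‖ ≤ KH := by
    intro l
    by_cases hmem : x l ∈ cube n R
    · rw [hfdef]; simp only [Set.indicator_of_mem hmem]
      exact (hKH _ hmem).1
    · rw [hfdef]; simp only [Set.indicator_of_notMem hmem, norm_zero]; exact hKH0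
  have hsummand : ∀ l ∈ Finset.range (M+1),
      (2 : ℂ) ^ (Complex.I * ((α * (l : ℝ) * t : ℝ) : ℂ)) *
        Set.indicator (cube n R) H
          (fun k => (2 : ℝ) ^ (β k * (l : ℝ)) * a k) = f l * z ^ l := by
    intro l _
    rw [hfdef, hz, hxdef]
    have harg : (Complex.I * ((α * (l:ℝ) * t : ℝ):ℂ))
        = (l:ℂ) * (Complex.I * ((α * t : ℝ):ℂ)) := by push_cast; ring
    rw [harg, Complex.cpow_nat_mul, mul_comm]
  rw [Finset.sum_congr rfl hsummand, ← norm_mul]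
  have byparts := Finset.sum_range_by_parts f (fun i => z ^ i) (M+1)
  simp only [smul_eq_mul, Nat.add_sub_cancel] at byparts
  rw [byparts, sub_mul, mul_assoc, geom_sum_mul, Finset.sum_mul]
  have hterm : ∀ i ∈ Finset.range M,
      ((f (i+1) - f i) * ∑ j ∈ Finset.range (i+1), z ^ j) * (z - 1)
        = (f (i+1) - f i) * (z ^ (i+1) - 1) := fun i _ => by
    rw [mul_assoc, geom_sum_mul]
  rw [Finset.sum_congr rfl hterm]
  -- auxiliary facts for the variation bound
  have hdiffat : ∀ y ∈ cube n R, DifferentiableAt ℝ H y := fun y hy =>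
    (hH.differentiableOn one_ne_zero).differentiableAt (hU.mem_nhds (hsub hy))
  have hconv : Convex ℝ (cube n R) := convex_pi fun k _ => convex_Icc _ _
  have hcoordbound : ∀ (l : ℕ) (k : Fin n),
      x l ∈ cube n R → |a k| * (2:ℝ) ^ (β k * (l:ℝ)) ≤ R k := by
    intro l k hmem
    rw [hxdef] at hmem
    simp only [cube, Set.mem_univ_pi, Set.mem_Icc, ← abs_le] at hmem
    have h := hmem k
    calc |a k| * (2:ℝ) ^ (β k * (l:ℝ)) = |(2:ℝ) ^ (β k * (l:ℝ)) * a k| := by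
          rw [abs_mul, abs_of_pos (Real.rpow_pos_of_pos two_pos _)]; ring
      _ ≤ R k := h
  have hintv : ∀ i l j : ℕ, i ≤ l → l ≤ j → x i ∈ cube n R → x j ∈ cube n R →
      x l ∈ cube n R := by
    intro i l j h1 h2 hi hj
    rw [hxdef] at hi hj ⊢
    exact aux_interval R β a i l j h1 h2 hi hj
  have hMVT : ∀ i : ℕ, x i ∈ cube n R → x (i+1) ∈ cube n R →
      ‖f (i+1) - f i‖ ≤ KH * ∑ k, |(2:ℝ) ^ (β k) - 1| * (|a k| * (2:ℝ) ^ (β k * (i:ℝ))) := by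
    intro i hi hi1
    have heq : ‖f (i+1) - f i‖ = ‖H (x (i+1)) - H (x i)‖ := by
      rw [hfdef]; simp only [Set.indicator_of_mem hi, Set.indicator_of_mem hi1]
    rw [heq]
    have hle := hconv.norm_image_sub_le_of_norm_fderiv_le hdiffat
      (fun y hy => (hKH y hy).2) hi hi1
    refine hle.trans (mul_le_mul_of_nonneg_left ?_ hKH0)
    have hnn : (0:ℝ) ≤ ∑ k, |(2:ℝ) ^ (β k) - 1| * (|a k| * (2:ℝ) ^ (β k * (i:ℝ))) :=
      Finset.sum_nonneg fun k _ => mul_nonneg (abs_nonneg _)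
        (mul_nonneg (abs_nonneg _) (Real.rpow_pos_of_pos two_pos _).le)
    rw [pi_norm_le_iff_of_nonneg hnn]
    intro k
    have hcoord : (x (i+1) - x i) k
        = ((2:ℝ) ^ (β k * ((i:ℝ)+1)) - (2:ℝ) ^ (β k * (i:ℝ))) * a k := by
      rw [hxdef]; simp only [Pi.sub_apply]; push_cast; ring
    rw [hcoord, Real.norm_eq_abs]
    have e2 : (2:ℝ) ^ (β k * ((i:ℝ)+1)) = (2:ℝ) ^ (β k * (i:ℝ)) * (2:ℝ) ^ (β k) := by
      rw [← Real.rpow_add two_pos]; ring_nf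
    have e3 : |((2:ℝ) ^ (β k * ((i:ℝ)+1)) - (2:ℝ) ^ (β k * (i:ℝ))) * a k|
        = |(2:ℝ) ^ (β k) - 1| * (|a k| * (2:ℝ) ^ (β k * (i:ℝ))) := by
      rw [e2, show (2:ℝ) ^ (β k * (i:ℝ)) * (2:ℝ) ^ (β k) - (2:ℝ) ^ (β k * (i:ℝ))
          = ((2:ℝ) ^ (β k) - 1) * (2:ℝ) ^ (β k * (i:ℝ)) by ring, abs_mul, abs_mul,
        abs_of_pos (Real.rpow_pos_of_pos two_pos (β k * (i:ℝ)))]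
      ring
    rw [e3]
    exact Finset.single_le_sum
      (f := fun k => |(2:ℝ) ^ (β k) - 1| * (|a k| * (2:ℝ) ^ (β k * (i:ℝ))))
      (fun k _ => mul_nonneg (abs_nonneg _)
        (mul_nonneg (abs_nonneg _) (Real.rpow_pos_of_pos two_pos _).le)) (Finset.mem_univ k)
  -- variation bound
  have hvar : ∑ i ∈ Finset.range M, ‖f (i+1) - f i‖ ≤ (2 + V) * KH := by
    have hpoint : ∀ i ∈ Finset.range M, ‖f (i+1) - f i‖ ≤
        (if x i ∈ cube n R ∧ x (i+1) ∈ cube n R then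
          KH * ∑ k, |(2:ℝ) ^ (β k) - 1| * (|a k| * (2:ℝ) ^ (β k * (i:ℝ))) else 0)
        + ((if ¬ x i ∈ cube n R ∧ x (i+1) ∈ cube n R then KH else 0)
          + (if x i ∈ cube n R ∧ ¬ x (i+1) ∈ cube n R then KH else 0)) := by
      intro i _
      by_cases h1 : x i ∈ cube n R <;> by_cases h2 : x (i+1) ∈ cube n R
      · simpa [h1, h2] using hMVT i h1 h2
      · have hb : ‖f (i+1) - f i‖ ≤ KH := by
          rw [hfdef]
          simp only [Set.indicator_of_notMem h2, Set.indicator_of_mem h1, zero_sub, norm_neg]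
          exact (hKH _ h1).1
        simpa [h1, h2] using hb
      · have hb : ‖f (i+1) - f i‖ ≤ KH := by
          rw [hfdef]
          simp only [Set.indicator_of_notMem h1, Set.indicator_of_mem h2, sub_zero]
          exact (hKH _ h2).1
        simpa [h1, h2] using hb
      · have hb : ‖f (i+1) - f i‖ = 0 := by
          rw [hfdef]
          simp [Set.indicator_of_notMem h1, Set.indicator_of_notMem h2]
        simp [h1, h2, hb]
    have hS : ∑ i ∈ Finset.range M, (if x i ∈ cube n R ∧ x (i+1) ∈ cube n R then
        KH * ∑ k, |(2:ℝ) ^ (β k) - 1| * (|a k| * (2:ℝ) ^ (β k * (i:ℝ))) else 0) ≤ KH * V := by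
      rw [← Finset.sum_filter, ← Finset.mul_sum]
      refine mul_le_mul_of_nonneg_left ?_ hKH0
      rw [Finset.sum_comm, hV]
      refine Finset.sum_le_sum fun k _ => ?_
      rw [← Finset.mul_sum]
      refine mul_le_mul_of_nonneg_left ?_ (abs_nonneg _)
      exact aux_k (hβ k) (hR k).le _
        (fun i hi => hcoordbound i k ((Finset.mem_filter.mp hi).2).1)
    have hF1 : ∑ i ∈ Finset.range M,
        (if ¬ x i ∈ cube n R ∧ x (i+1) ∈ cube n R then KH else 0) ≤ KH := by
      rw [← Finset.sum_filter, Finset.sum_const, nsmul_eq_mul]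
      have hcard : ((Finset.range M).filter
          (fun i => ¬ x i ∈ cube n R ∧ x (i+1) ∈ cube n R)).card ≤ 1 := by
        refine Finset.card_le_one.mpr fun i hi j hj => ?_
        simp only [Finset.mem_filter] at hi hj
        by_contra hne
        rcases Nat.lt_or_ge i j with hij | hij
        · exact hj.2.1 (hintv (i+1) j (j+1) (by omega) (by omega) hi.2.2 hj.2.2)
        · have hij' : j < i := by omega
          exact hi.2.1 (hintv (j+1) i (i+1) (by omega) (by omega) hj.2.2 hi.2.2)
      have hc : ((((Finset.range M).filter
          (fun i => ¬ x i ∈ cube n R ∧ x (i+1) ∈ cube n R)).card : ℝ)) ≤ 1 := by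
        exact_mod_cast hcard
      nlinarith
    have hF2 : ∑ i ∈ Finset.range M,
        (if x i ∈ cube n R ∧ ¬ x (i+1) ∈ cube n R then KH else 0) ≤ KH := by
      rw [← Finset.sum_filter, Finset.sum_const, nsmul_eq_mul]
      have hcard : ((Finset.range M).filter
          (fun i => x i ∈ cube n R ∧ ¬ x (i+1) ∈ cube n R)).card ≤ 1 := by
        refine Finset.card_le_one.mpr fun i hi j hj => ?_
        simp only [Finset.mem_filter] at hi hj
        by_contra hne
        rcases Nat.lt_or_ge i j with hij | hij
        · exact hi.2.2 (hintv i (i+1) j (by omega) (by omega) hi.2.1 hj.2.1)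
        · have hij' : j < i := by omega
          exact hj.2.2 (hintv j (j+1) i (by omega) (by omega) hj.2.1 hi.2.1)
      have hc : ((((Finset.range M).filter
          (fun i => x i ∈ cube n R ∧ ¬ x (i+1) ∈ cube n R)).card : ℝ)) ≤ 1 := by
        exact_mod_cast hcard
      nlinarith
    refine le_trans (Finset.sum_le_sum hpoint) ?_
    rw [Finset.sum_add_distrib, Finset.sum_add_distrib]
    have := add_le_add hS (add_le_add hF1 hF2)
    linarith
  -- final estimate
  calc ‖f M * (z ^ (M+1) - 1) - ∑ i ∈ Finset.range M, (f (i+1) - f i) * (z ^ (i+1) - 1)‖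
      ≤ ‖f M * (z ^ (M+1) - 1)‖
        + ‖∑ i ∈ Finset.range M, (f (i+1) - f i) * (z ^ (i+1) - 1)‖ := norm_sub_le _ _
    _ ≤ ‖f M‖ * ‖z ^ (M+1) - 1‖
        + ∑ i ∈ Finset.range M, ‖f (i+1) - f i‖ * ‖z ^ (i+1) - 1‖ :=
        add_le_add (le_of_eq (norm_mul _ _))
          ((norm_sum_le _ _).trans (le_of_eq (Finset.sum_congr rfl fun i _ => norm_mul _ _)))
    _ ≤ KH * 2 + ∑ i ∈ Finset.range M, ‖f (i+1) - f i‖ * 2 :=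
        add_le_add (mul_le_mul (hfbound M) (hgeom (M+1)) (norm_nonneg _) hKH0)
          (Finset.sum_le_sum fun i _ => mul_le_mul_of_nonneg_left (hgeom _) (norm_nonneg _))
    _ = KH * 2 + (∑ i ∈ Finset.range M, ‖f (i+1) - f i‖) * 2 := by
        rw [Finset.sum_mul]
    _ ≤ KH * 2 + ((2 + V) * KH) * 2 :=
        add_le_add (le_refl _) (mul_le_mul_of_nonneg_right hvar (by norm_num))
    _ = 2 * (3 + V) * KH := by ring
end

section
/- Hölder variant of the oscillatory sum bound: With Q, α, β^k, a_k, M as in the one-parameter oscillatory sum lemma and 0 < ε < 1, define F(t) as before. Then |F(t)| ≤ C (|H(0)| + ∑_{k=1}^n C_k) / |2^{iαt} − 1| where C depends only on Q, α, the β^k and ε, and C_k = sup_{y ∈ ∏_{j≤k}[-R_j,R_j]} |y_k|^{1−ε} ∫₀¹ |(∂_k H)(y_1,…,y_{k−1}, s y_k, 0,…,0)| ds. -/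
open MeasureTheory

theorem aux_geom_s4 {q : ℝ} (h0 : 0 < q) (h1 : q < 1) (T : Finset ℕ) (g : ℕ → ℕ)
    (hg : Set.InjOn g T) : ∑ l ∈ T, q ^ g l ≤ (1 - q)⁻¹ := by
  have h1q : 0 < 1 - q := by linarith
  calc ∑ l ∈ T, q ^ g l = ∑ j ∈ T.image g, q ^ j := (Finset.sum_image (fun x hx y hy h => hg hx hy h)).symm
    _ ≤ ∑ j ∈ Finset.range ((T.image g).sup id + 1), q ^ j := by
        apply Finset.sum_le_sum_of_subset_of_nonneg
        · intro j hj
          exact Finset.mem_range.2 (Nat.lt_succ_of_le (Finset.le_sup (f := id) hj))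
        · intro i _ _; positivity
    _ ≤ (1 - q)⁻¹ := by
        set N := (T.image g).sup id + 1
        have := geom_sum_mul q N
        have hle : (∑ i ∈ Finset.range N, q ^ i) * (1 - q) ≤ 1 := by
          have hq : 0 ≤ q ^ N := by positivity
          nlinarith [this]
        rw [← one_div, le_div_iff₀ h1q]
        exact hle

theorem aux_core {b e Rk ak : ℝ} (he : 0 < e) (hb : b ≠ 0) (hRk : 0 ≤ Rk)
    (S : Finset ℕ) (m : ℕ)
    (hm : (2:ℝ) ^ (b * m) * |ak| ≤ Rk) (g : ℕ → ℕ) (hginj : Set.InjOn g S)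
    (hg : ∀ l ∈ S, (b * l - b * m) * e = -(e * |b|) * (g l : ℝ)) :
    ∑ l ∈ S, ((2:ℝ) ^ (b * l) * |ak|) ^ e ≤ Rk ^ e * (1 - (2:ℝ) ^ (-(e * |b|)))⁻¹ := by
  set q : ℝ := (2:ℝ) ^ (-(e * |b|)) with hqdef
  have hq0 : 0 < q := Real.rpow_pos_of_pos two_pos _
  have hq1 : q < 1 := by
    apply Real.rpow_lt_one_of_one_lt_of_neg one_lt_two
    have : 0 < |b| := abs_pos.mpr hb
    nlinarith
  have hterm : ∀ l ∈ S, ((2:ℝ) ^ (b * l) * |ak|) ^ e ≤ Rk ^ e * q ^ g l := by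
    intro l hl
    have hsplit : (2:ℝ) ^ (b * l) * |ak| = ((2:ℝ) ^ (b * m) * |ak|) * (2:ℝ) ^ (b * l - b * m) := by
      rw [mul_right_comm, ← Real.rpow_add two_pos]
      ring_nf
    have h1 : (2:ℝ) ^ (b * l) * |ak| ≤ Rk * (2:ℝ) ^ (b * l - b * m) := by
      rw [hsplit]
      exact mul_le_mul_of_nonneg_right hm (Real.rpow_pos_of_pos two_pos _).le
    calc ((2:ℝ) ^ (b * l) * |ak|) ^ e ≤ (Rk * (2:ℝ) ^ (b * l - b * m)) ^ e := by
          apply Real.rpow_le_rpow (by positivity) h1 he.le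
      _ = Rk ^ e * ((2:ℝ) ^ (b * l - b * m)) ^ e := Real.mul_rpow hRk (Real.rpow_pos_of_pos two_pos _).le
      _ = Rk ^ e * q ^ g l := by
          rw [← Real.rpow_natCast q (g l), hqdef, ← Real.rpow_mul (by norm_num),
            ← Real.rpow_mul (by norm_num), hg l hl]
  calc ∑ l ∈ S, ((2:ℝ) ^ (b * l) * |ak|) ^ e ≤ ∑ l ∈ S, Rk ^ e * q ^ g l :=
        Finset.sum_le_sum hterm
    _ = Rk ^ e * ∑ l ∈ S, q ^ g l := by rw [Finset.mul_sum]
    _ ≤ Rk ^ e * (1 - q)⁻¹ := by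
        apply mul_le_mul_of_nonneg_left (aux_geom_s4 hq0 hq1 S g hginj) (by positivity)


theorem aux_ftc (n : ℕ) (R : Fin n → ℝ) (hR : ∀ k, 0 < R k)
    (H : (Fin n → ℝ) → ℂ) (U : Set (Fin n → ℝ)) (hU : IsOpen U) (hQU : cube n R ⊆ U)
    (hH : ContDiffOn ℝ 1 H U) (y : Fin n → ℝ) (hy : y ∈ cube n R) :
    ‖H y - H 0‖ ≤ ∑ k : Fin n, |y k| *
      ∫ s in (0:ℝ)..1,
        ‖fderiv ℝ H (fun j => if j < k then y j else if j = k then s * y k else 0)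
          (Pi.single k 1)‖ := by
  have hdiff : ∀ x ∈ U, DifferentiableAt ℝ H x := fun x hx =>
    (hH.contDiffAt (hU.mem_nhds hx)).differentiableAt one_ne_zero
  have hcont : ContinuousOn (fderiv ℝ H) U := hH.continuousOn_fderiv_of_isOpen hU le_rfl
  set q : ℕ → (Fin n → ℝ) := fun m j => if (j : ℕ) < m then y j else 0 with hq
  have hq0 : q 0 = 0 := by funext j; simp [hq]
  have hqn : q n = y := by funext j; simp [hq, j.isLt]
  have htel : H y - H 0 = ∑ k ∈ Finset.range n, (H (q (k + 1)) - H (q k)) := by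
    rw [Finset.sum_range_sub (fun i => H (q i)), hq0, hqn]
  rw [htel]
  refine le_trans (norm_sum_le _ _) ?_
  rw [← Fin.sum_univ_eq_sum_range (fun i => ‖H (q (i + 1)) - H (q i)‖) n]
  refine Finset.sum_le_sum fun k _ => ?_
  -- setup for coordinate k
  set v : Fin n → ℝ := y k • (Pi.single k 1 : Fin n → ℝ) with hv
  set γ : ℝ → (Fin n → ℝ) :=
    fun s => fun j => if j < k then y j else if j = k then s * y k else 0 with hγ
  have hγeq : ∀ s, γ s = q k + s • v := by
    intro s; funext j
    simp only [hγ, hq, hv, Pi.add_apply, Pi.smul_apply, Pi.single_apply, smul_eq_mul]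
    by_cases h2 : j = k
    · subst h2; simp [lt_irrefl, mul_comm]
    · by_cases h1 : j < k
      · simp [h1, Fin.lt_def.mp h1, h2]
      · have h1' : ¬ ((j:ℕ) < (k:ℕ)) := fun h => h1 (Fin.lt_def.mpr h)
        simp [h1, h2, h1']
  have hγmem : ∀ s ∈ Set.Icc (0:ℝ) 1, γ s ∈ cube n R := by
    intro s hs j _
    have hyk := hy k (Set.mem_univ k)
    simp only [Set.mem_Icc] at hyk ⊢
    by_cases h1 : j < k
    · have := hy j (Set.mem_univ j); simpa [hγ, h1] using this
    · by_cases h2 : j = k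
      · subst h2
        have hval : γ s j = s * y j := by simp [hγ]
        rw [hval]
        constructor
        · nlinarith [hs.1, hs.2, hyk.1, hyk.2, (hR j).le, abs_nonneg (y j)]
        · nlinarith [hs.1, hs.2, hyk.1, hyk.2, (hR j).le]
      · simp [hγ, h1, h2, (hR j).le, le_of_lt (hR j)]
  have hγ0 : γ 0 = q k := by
    funext j
    by_cases h1 : j < k
    · simp [hγ, hq, h1, Fin.lt_def.mp h1]
    · have h1' : ¬ ((j:ℕ) < (k:ℕ)) := by rw [← Fin.lt_def]; exact h1
      by_cases h2 : j = k <;> simp [hγ, hq, h1, h2, h1']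
  have hγ1 : γ 1 = q (k + 1) := by
    funext j
    by_cases h1 : j < k
    · have : (j:ℕ) < (k:ℕ) + 1 := Nat.lt_succ_of_lt (Fin.lt_def.mp h1)
      simp [hγ, hq, h1, this]
    · by_cases h2 : j = k
      · subst h2; simp [hγ, hq, h1]
      · have h1' : ¬ ((j:ℕ) < (k:ℕ)) := by rw [← Fin.lt_def]; exact h1
        have h2' : (j:ℕ) ≠ (k:ℕ) := fun h => h2 (Fin.ext h)
        have : ¬ ((j:ℕ) < (k:ℕ) + 1) := by omega
        simp [hγ, hq, h1, h2, this]
  have hγcont : Continuous γ := by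
    have : Continuous fun s : ℝ => q ↑k + s • v :=
      continuous_const.add (continuous_id.smul continuous_const)
    simpa [← hγeq] using this
  have hderiv : ∀ s ∈ Set.uIcc (0:ℝ) 1,
      HasDerivAt (fun s => H (γ s)) ((fderiv ℝ H (γ s)) v) s := by
    intro s hs
    rw [Set.uIcc_of_le (by norm_num : (0:ℝ) ≤ 1)] at hs
    have hp : HasDerivAt (fun s : ℝ => q ↑k + s • v) v s := by
      have := ((hasDerivAt_id s).smul_const v).const_add (q ↑k)
      simpa using this
    have hd : DifferentiableAt ℝ H (γ s) := hdiff _ (hQU (hγmem s hs))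
    have := hd.hasFDerivAt.comp_hasDerivAt s (by simpa [← hγeq] using hp)
    exact this
  have hcint : ContinuousOn (fun s => (fderiv ℝ H (γ s)) v) (Set.Icc (0:ℝ) 1) := by
    apply ContinuousOn.clm_apply
    · exact hcont.comp hγcont.continuousOn (fun s hs => hQU (hγmem s hs))
    · exact continuousOn_const
  have hint : IntervalIntegrable (fun s => (fderiv ℝ H (γ s)) v) MeasureTheory.volume 0 1 := by
    apply ContinuousOn.intervalIntegrable
    rwa [Set.uIcc_of_le (by norm_num : (0:ℝ) ≤ 1)]
  have heq : ∫ s in (0:ℝ)..1, (fderiv ℝ H (γ s)) v = H (q (↑k + 1)) - H (q ↑k) := by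
    rw [intervalIntegral.integral_eq_sub_of_hasDerivAt hderiv hint, hγ0, hγ1]
  rw [← heq]
  refine le_trans (intervalIntegral.norm_integral_le_integral_norm (by norm_num)) ?_
  rw [← intervalIntegral.integral_const_mul]
  apply le_of_eq
  apply intervalIntegral.integral_congr
  intro s _
  show ‖(fderiv ℝ H (γ s)) v‖ = |y k| * ‖(fderiv ℝ H (γ s)) (Pi.single k 1)‖
  rw [hv, _root_.map_smul, norm_smul, Real.norm_eq_abs]


theorem aux_cubeabs {n : ℕ} {R : Fin n → ℝ} {x : Fin n → ℝ} :
    x ∈ cube n R ↔ ∀ k, |x k| ≤ R k := by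
  simp only [cube, Set.mem_pi, Set.mem_univ, true_implies, Set.mem_Icc, abs_le]

/-- Hölder variant of the oscillatory sum bound:
`|F(t)| ≤ C (|H(0)| + ∑ C_k) / |2^{iαt} − 1|`, where
`C_k = sup_y |y_k|^{1-ε} ∫₀¹ |(∂_k H)(y₁,…,y_{k−1}, s y_k, 0,…,0)| ds`. -/
theorem stmt_4 (n : ℕ) (R : Fin n → ℝ) (hR : ∀ k, 0 < R k)
    (α : ℝ) (hα : α ≠ 0) (β : Fin n → ℝ) (hβ : ∀ k, β k ≠ 0)
    (ε : ℝ) (hε0 : 0 < ε) (hε1 : ε < 1) :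
    ∃ C : ℝ, 0 < C ∧
      ∀ (H : (Fin n → ℝ) → ℂ) (U : Set (Fin n → ℝ)),
        IsOpen U → cube n R ⊆ U → ContDiffOn ℝ 1 H U →
        ∀ Ck : Fin n → ℝ,
          (∀ k : Fin n, ∀ y ∈ cube n R,
            |y k| ^ (1 - ε) *
              ∫ s in (0:ℝ)..1,
                ‖fderiv ℝ H (fun j => if j < k then y j else if j = k then s * y k else 0)
                  (Pi.single k 1)‖ ≤ Ck k) →
          ∀ a : Fin n → ℝ, (∀ k, a k ≠ 0) →
            ∀ M : ℕ, 0 < M → ∀ t : ℝ,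
              ‖∑ l ∈ Finset.range (M + 1),
                  (2 : ℂ) ^ (Complex.I * ((α * (l : ℝ) * t : ℝ) : ℂ)) *
                    Set.indicator (cube n R) H
                      (fun k => (2 : ℝ) ^ (β k * (l : ℝ)) * a k)‖ *
                ‖(2 : ℂ) ^ (Complex.I * ((α * t : ℝ) : ℂ)) - 1‖ ≤
                C * (‖H 0‖ + ∑ k : Fin n, Ck k) := by
  classical
  set Dk : Fin n → ℝ := fun k => R k ^ ε * (1 - (2:ℝ) ^ (-(ε * |β k|)))⁻¹ with hDkdef
  have hqk : ∀ k, 0 < (2:ℝ) ^ (-(ε * |β k|)) ∧ (2:ℝ) ^ (-(ε * |β k|)) < 1 := by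
    intro k
    refine ⟨Real.rpow_pos_of_pos two_pos _, ?_⟩
    apply Real.rpow_lt_one_of_one_lt_of_neg one_lt_two
    have : 0 < |β k| := abs_pos.mpr (hβ k)
    nlinarith
  have hDk0 : ∀ k, 0 ≤ Dk k := by
    intro k
    have h1 := (hqk k).2
    have : 0 < 1 - (2:ℝ) ^ (-(ε * |β k|)) := by linarith
    have hRk := (hR k).le
    positivity
  have hsDk : 0 ≤ ∑ k : Fin n, Dk k := Finset.sum_nonneg fun k _ => hDk0 k
  refine ⟨2 + 2 * ∑ k : Fin n, Dk k, by linarith, ?_⟩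
  intro H U hUopen hQU hH Ck hCk a ha M hM t
  set z : ℂ := (2:ℂ) ^ (Complex.I * ((α * t : ℝ) : ℂ)) with hzdef
  have hz : ‖z‖ = 1 := by
    rw [hzdef, show ((2:ℂ)) = ((2:ℝ):ℂ) by norm_num,
      Complex.norm_cpow_eq_rpow_re_of_pos two_pos]
    simp [Complex.mul_re]
  have hz2 : ‖z - 1‖ ≤ 2 := by
    refine le_trans (norm_sub_le _ _) ?_
    rw [hz]; norm_num
  have hznorm : ∀ l : ℕ, ‖z ^ l‖ = 1 := by intro l; rw [norm_pow, hz, one_pow]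
  set p : ℕ → (Fin n → ℝ) := fun l k => (2:ℝ) ^ (β k * (l : ℝ)) * a k with hpdef
  have h0mem : (0 : Fin n → ℝ) ∈ cube n R := by
    rw [aux_cubeabs]; intro k; simp [(hR k).le]
  have hCk0 : ∀ k, 0 ≤ Ck k := by
    intro k
    have := hCk k 0 h0mem
    simpa [Real.zero_rpow (by linarith : (1:ℝ) - ε ≠ 0)] using this
  have hsCk : 0 ≤ ∑ k : Fin n, Ck k := Finset.sum_nonneg fun k _ => hCk0 k
  set S : Finset ℕ := (Finset.range (M + 1)).filter (fun l => p l ∈ cube n R) with hSdef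
  have hmemS : ∀ l ∈ S, ∀ k, (2:ℝ) ^ (β k * (l : ℝ)) * |a k| ≤ R k := by
    intro l hl k
    have h1 := (Finset.mem_filter.mp hl).2
    have h2 := aux_cubeabs.mp h1 k
    rwa [hpdef, abs_mul, abs_of_pos (Real.rpow_pos_of_pos two_pos _)] at h2
  -- rewrite the sum
  have hzl : ∀ l : ℕ, (2:ℂ) ^ (Complex.I * ((α * (l : ℝ) * t : ℝ) : ℂ)) = z ^ l := by
    intro l
    rw [show (Complex.I * ((α * (l:ℝ) * t : ℝ):ℂ)) = (l:ℕ) * (Complex.I * ((α*t:ℝ):ℂ)) by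
      push_cast; ring, Complex.cpow_nat_mul]
  have hsum : (∑ l ∈ Finset.range (M + 1),
      (2 : ℂ) ^ (Complex.I * ((α * (l : ℝ) * t : ℝ) : ℂ)) *
        Set.indicator (cube n R) H (fun k => (2 : ℝ) ^ (β k * (l : ℝ)) * a k)) =
      ∑ l ∈ S, z ^ l * H (p l) := by
    rw [hSdef, Finset.sum_filter]
    apply Finset.sum_congr rfl
    intro l _
    rw [hzl l, Set.indicator_apply]
    by_cases h : p l ∈ cube n R
    · rw [if_pos h, if_pos (show (fun k => (2:ℝ) ^ (β k * (l:ℝ)) * a k) ∈ cube n R from h)]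
    · rw [if_neg h, if_neg (show ¬ (fun k => (2:ℝ) ^ (β k * (l:ℝ)) * a k) ∈ cube n R from h),
        mul_zero]
  rw [hsum]
  -- geometric bound for the interval sum
  have hgeo : ‖(∑ l ∈ S, z ^ l) * (z - 1)‖ ≤ 2 := by
    rcases S.eq_empty_or_nonempty with h | hS
    · rw [h]; simp
    · have hconv : ∀ l₁ l l₂ : ℕ, l₁ ∈ S → l₂ ∈ S → l₁ ≤ l → l ≤ l₂ → l ∈ S := by
        intro l₁ l l₂ h1 h2 h12 h23
        have hm1 := Finset.mem_filter.mp h1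
        have hm2 := Finset.mem_filter.mp h2
        rw [hSdef, Finset.mem_filter]
        refine ⟨Finset.mem_range.mpr ?_, ?_⟩
        · have := Finset.mem_range.mp hm2.1; omega
        · rw [aux_cubeabs]
          intro k
          have habs : |p l k| = (2:ℝ) ^ (β k * (l:ℝ)) * |a k| := by
            rw [hpdef, abs_mul, abs_of_pos (Real.rpow_pos_of_pos two_pos _)]
          rw [habs]
          rcases (hβ k).lt_or_gt with hneg | hpos
          · have hexp : β k * (l:ℝ) ≤ β k * (l₁:ℝ) :=
              mul_le_mul_of_nonpos_left (Nat.cast_le.mpr h12) hneg.le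
            calc (2:ℝ) ^ (β k * (l:ℝ)) * |a k| ≤ (2:ℝ) ^ (β k * (l₁:ℝ)) * |a k| :=
                  mul_le_mul_of_nonneg_right
                    (Real.rpow_le_rpow_of_exponent_le one_le_two hexp) (abs_nonneg _)
              _ ≤ R k := hmemS l₁ h1 k
          · have hexp : β k * (l:ℝ) ≤ β k * (l₂:ℝ) :=
              mul_le_mul_of_nonneg_left (Nat.cast_le.mpr h23) hpos.le
            calc (2:ℝ) ^ (β k * (l:ℝ)) * |a k| ≤ (2:ℝ) ^ (β k * (l₂:ℝ)) * |a k| :=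
                  mul_le_mul_of_nonneg_right
                    (Real.rpow_le_rpow_of_exponent_le one_le_two hexp) (abs_nonneg _)
              _ ≤ R k := hmemS l₂ h2 k
      have hset : S = Finset.Icc (S.min' hS) (S.max' hS) := by
        apply Finset.ext
        intro l
        rw [Finset.mem_Icc]
        constructor
        · intro hl; exact ⟨S.min'_le l hl, S.le_max' l hl⟩
        · rintro ⟨ha1, ha2⟩
          exact hconv _ _ _ (S.min'_mem hS) (S.max'_mem hS) ha1 ha2
      have hab : S.min' hS ≤ S.max' hS := S.min'_le _ (S.max'_mem hS)
      rw [hset, ← Finset.Ico_add_one_right_eq_Icc,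
        Finset.sum_Ico_eq_sub _ (show S.min' hS ≤ S.max' hS + 1 from Nat.le_succ_of_le hab), sub_mul,
        geom_sum_mul, geom_sum_mul,
        show z ^ (S.max' hS + 1) - 1 - (z ^ S.min' hS - 1)
          = z ^ (S.max' hS + 1) - z ^ S.min' hS by ring]
      refine le_trans (norm_sub_le _ _) ?_
      rw [hznorm, hznorm]; norm_num
  -- per-coordinate geometric sum bound
  have hgeok : ∀ k : Fin n, ∑ l ∈ S, |p l k| ^ ε ≤ Dk k := by
    intro k
    rcases S.eq_empty_or_nonempty with h | hS
    · rw [h]; simpa using hDk0 k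
    · have habs : ∀ l : ℕ, |p l k| = (2:ℝ) ^ (β k * (l:ℝ)) * |a k| := by
        intro l
        rw [hpdef, abs_mul, abs_of_pos (Real.rpow_pos_of_pos two_pos _)]
      rw [show (∑ l ∈ S, |p l k| ^ ε) = ∑ l ∈ S, ((2:ℝ) ^ (β k * (l:ℝ)) * |a k|) ^ ε from
        Finset.sum_congr rfl fun l _ => by rw [habs]]
      rcases (hβ k).lt_or_gt with hneg | hpos
      · -- β k < 0 : use min'
        refine aux_core hε0 (hβ k) (hR k).le S (S.min' hS)
          (hmemS _ (S.min'_mem hS) k) (fun l => l - S.min' hS) ?_ ?_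
        · intro l₁ hl₁ l₂ hl₂ hgl
          have hgl' : l₁ - S.min' hS = l₂ - S.min' hS := hgl
          have b1 := S.min'_le l₁ hl₁
          have b2 := S.min'_le l₂ hl₂
          omega
        · intro l hl
          rw [Nat.cast_sub (S.min'_le l hl), abs_of_neg hneg]
          ring
      · -- β k > 0 : use max'
        refine aux_core hε0 (hβ k) (hR k).le S (S.max' hS)
          (hmemS _ (S.max'_mem hS) k) (fun l => S.max' hS - l) ?_ ?_
        · intro l₁ hl₁ l₂ hl₂ hgl
          have hgl' : S.max' hS - l₁ = S.max' hS - l₂ := hgl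
          have b1 := S.le_max' l₁ hl₁
          have b2 := S.le_max' l₂ hl₂
          omega
        · intro l hl
          rw [Nat.cast_sub (S.le_max' l hl), abs_of_pos hpos]
          ring
  -- pointwise FTC bound
  have hpoint : ∀ l ∈ S, ‖H (p l) - H 0‖ ≤ ∑ k : Fin n, |p l k| ^ ε * Ck k := by
    intro l hl
    have hmem' : p l ∈ cube n R := (Finset.mem_filter.mp hl).2
    refine (aux_ftc n R hR H U hUopen hQU hH (p l) hmem').trans
      (Finset.sum_le_sum fun k _ => ?_)
    have hc := hCk k (p l) hmem'
    have hpos : 0 < |p l k| := by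
      rw [hpdef]
      exact abs_pos.mpr (mul_ne_zero (Real.rpow_pos_of_pos two_pos _).ne' (ha k))
    have key : |p l k| = |p l k| ^ ε * |p l k| ^ (1 - ε) := by
      rw [← Real.rpow_add hpos, show ε + (1 - ε) = 1 from by ring, Real.rpow_one]
    calc |p l k| * ∫ s in (0:ℝ)..1,
          ‖fderiv ℝ H (fun j => if j < k then p l j else if j = k then s * p l k else 0)
            (Pi.single k 1)‖
        = |p l k| ^ ε * (|p l k| ^ (1 - ε) * ∫ s in (0:ℝ)..1,
          ‖fderiv ℝ H (fun j => if j < k then p l j else if j = k then s * p l k else 0)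
            (Pi.single k 1)‖) := by rw [← mul_assoc, ← key]
      _ ≤ |p l k| ^ ε * Ck k :=
          mul_le_mul_of_nonneg_left hc (Real.rpow_nonneg (abs_nonneg _) _)
  have hCkD : ∑ l ∈ S, ‖H (p l) - H 0‖ ≤ ∑ k : Fin n, Dk k * Ck k := by
    calc ∑ l ∈ S, ‖H (p l) - H 0‖ ≤ ∑ l ∈ S, ∑ k : Fin n, |p l k| ^ ε * Ck k :=
          Finset.sum_le_sum hpoint
      _ = ∑ k : Fin n, (∑ l ∈ S, |p l k| ^ ε) * Ck k := by
          rw [Finset.sum_comm]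
          exact Finset.sum_congr rfl fun k _ => (Finset.sum_mul _ _ _).symm
      _ ≤ ∑ k : Fin n, Dk k * Ck k :=
          Finset.sum_le_sum fun k _ => mul_le_mul_of_nonneg_right (hgeok k) (hCk0 k)
  -- final assembly
  have hsplit : (∑ l ∈ S, z ^ l) * H 0 + ∑ l ∈ S, z ^ l * (H (p l) - H 0)
      = ∑ l ∈ S, z ^ l * H (p l) := by
    rw [Finset.sum_mul, ← Finset.sum_add_distrib]
    exact Finset.sum_congr rfl fun l _ => by ring
  have hDkCk : ∑ k : Fin n, Dk k * Ck k ≤ (∑ k : Fin n, Dk k) * (∑ k : Fin n, Ck k) := by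
    calc ∑ k : Fin n, Dk k * Ck k ≤ ∑ k : Fin n, (∑ j : Fin n, Dk j) * Ck k :=
          Finset.sum_le_sum fun k _ => mul_le_mul_of_nonneg_right
            (Finset.single_le_sum (fun j _ => hDk0 j) (Finset.mem_univ k)) (hCk0 k)
      _ = (∑ k : Fin n, Dk k) * (∑ k : Fin n, Ck k) := by rw [← Finset.mul_sum]
  have hH0 : (0:ℝ) ≤ ‖H 0‖ := norm_nonneg _
  calc ‖∑ l ∈ S, z ^ l * H (p l)‖ * ‖z - 1‖
      = ‖(∑ l ∈ S, z ^ l * H (p l)) * (z - 1)‖ := (norm_mul _ _).symm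
    _ = ‖(∑ l ∈ S, z ^ l) * H 0 * (z - 1) + (∑ l ∈ S, z ^ l * (H (p l) - H 0)) * (z - 1)‖ := by
        rw [← add_mul, hsplit]
    _ ≤ ‖(∑ l ∈ S, z ^ l) * (z - 1)‖ * ‖H 0‖ + 2 * ∑ l ∈ S, ‖H (p l) - H 0‖ := by
        refine (norm_add_le _ _).trans (add_le_add (le_of_eq ?_) ?_)
        · rw [norm_mul, norm_mul, norm_mul]; ring
        · calc ‖(∑ l ∈ S, z ^ l * (H (p l) - H 0)) * (z - 1)‖
              = ‖∑ l ∈ S, z ^ l * (H (p l) - H 0)‖ * ‖z - 1‖ := norm_mul _ _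
            _ ≤ (∑ l ∈ S, ‖z ^ l * (H (p l) - H 0)‖) * 2 :=
                mul_le_mul (norm_sum_le _ _) hz2 (norm_nonneg _)
                  (Finset.sum_nonneg fun l _ => norm_nonneg _)
            _ = 2 * ∑ l ∈ S, ‖H (p l) - H 0‖ := by
                rw [mul_comm]
                congr 1
                exact Finset.sum_congr rfl fun l _ => by rw [norm_mul, hznorm, one_mul]
    _ ≤ 2 * ‖H 0‖ + 2 * ∑ k : Fin n, Dk k * Ck k :=
        add_le_add (mul_le_mul_of_nonneg_right hgeo hH0)
          (mul_le_mul_of_nonneg_left hCkD (by norm_num))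
    _ ≤ (2 + 2 * ∑ k : Fin n, Dk k) * (‖H 0‖ + ∑ k : Fin n, Ck k) := by
        nlinarith [hDkCk, mul_nonneg hsDk hH0, hsCk, hsDk, hH0, mul_nonneg hsDk hsCk]
end

section
/- Polynomial root-separation lemma: Fix n ≥ 5 and x₀ ∼ 1 (i.e. |x₀| bounded above and below by absolute constants). Let P(x) = x^n + b x^{n−1} + c x^{n−2} be such that P''(x) = n(n−1) x^{n−4}(x − x₀ + ε)(x − x₀ − ε). (a) If |ε| ≤ c₁ for a sufficiently small constant c₁, then |P'(x)| ∼ 1 on a neighbourhood of x₀ depending on c₁ but not on ε. (b) If |ε| > c₂ > 0 and x₀ − ε ∼ 1 (resp. x₀ + ε ∼ 1), then |P'''(x₀ − ε)| ∼_{c₂} 1 (resp. |P'''(x₀ + ε)| ∼_{c₂} 1). -/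
/-- The polynomial `P(x) = xⁿ + b x^{n−1} + c x^{n−2}`. -/
noncomputable def P16 (n : ℕ) (b c : ℝ) : ℝ → ℝ :=
  fun x => x ^ n + b * x ^ (n - 1) + c * x ^ (n - 2)

lemma derivP16 {n : ℕ} (hn : 5 ≤ n) (b c : ℝ) (x : ℝ) :
    deriv (P16 n b c) x =
      (n:ℝ) * x ^ (n-1) + b * ((n:ℝ)-1) * x ^ (n-2) + c * ((n:ℝ)-2) * x ^ (n-3) := by
  have h1 : HasDerivAt (fun y : ℝ => y ^ n) ((n:ℝ) * x ^ (n-1)) x := hasDerivAt_pow n x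
  have h2 : HasDerivAt (fun y : ℝ => b * y ^ (n-1)) (b * (((n-1:ℕ)):ℝ) * x ^ (n-1-1)) x := by
    simpa [mul_assoc] using (hasDerivAt_pow (n-1) x).const_mul b
  have h3 : HasDerivAt (fun y : ℝ => c * y ^ (n-2)) (c * (((n-2:ℕ)):ℝ) * x ^ (n-2-1)) x := by
    simpa [mul_assoc] using (hasDerivAt_pow (n-2) x).const_mul c
  have hd := ((h1.add h2).add h3).deriv
  unfold P16
  rw [show (fun x : ℝ => x ^ n + b * x ^ (n - 1) + c * x ^ (n - 2)) = ((fun y : ℝ => y ^ n) + (fun y : ℝ => b * y ^ (n-1))) + (fun y : ℝ => c * y ^ (n-2)) from rfl,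
    hd, show n-1-1 = n-2 from by omega, show n-2-1 = n-3 from by omega,
    Nat.cast_sub (by omega : 1 ≤ n), Nat.cast_sub (by omega : 2 ≤ n)]
  norm_num

lemma deriv2P16 {n : ℕ} (hn : 5 ≤ n) (b c : ℝ) (x : ℝ) :
    deriv (deriv (P16 n b c)) x =
      (n:ℝ) * ((n:ℝ)-1) * x ^ (n-2) + b * ((n:ℝ)-1) * ((n:ℝ)-2) * x ^ (n-3)
        + c * ((n:ℝ)-2) * ((n:ℝ)-3) * x ^ (n-4) := by
  have hfun : deriv (P16 n b c) = fun y : ℝ =>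
      (n:ℝ) * y ^ (n-1) + b * ((n:ℝ)-1) * y ^ (n-2) + c * ((n:ℝ)-2) * y ^ (n-3) :=
    funext (derivP16 hn b c)
  rw [hfun]
  have h1 : HasDerivAt (fun y : ℝ => (n:ℝ) * y ^ (n-1)) ((n:ℝ) * ((((n-1:ℕ)):ℝ) * x ^ (n-1-1))) x :=
    (hasDerivAt_pow (n-1) x).const_mul _
  have h2 : HasDerivAt (fun y : ℝ => b * ((n:ℝ)-1) * y ^ (n-2))
      ((b * ((n:ℝ)-1)) * ((((n-2:ℕ)):ℝ) * x ^ (n-2-1))) x :=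
    (hasDerivAt_pow (n-2) x).const_mul _
  have h3 : HasDerivAt (fun y : ℝ => c * ((n:ℝ)-2) * y ^ (n-3))
      ((c * ((n:ℝ)-2)) * ((((n-3:ℕ)):ℝ) * x ^ (n-3-1))) x :=
    (hasDerivAt_pow (n-3) x).const_mul _
  rw [show (fun y : ℝ => (n:ℝ) * y ^ (n-1) + b * ((n:ℝ)-1) * y ^ (n-2) + c * ((n:ℝ)-2) * y ^ (n-3)) = ((fun y : ℝ => (n:ℝ) * y ^ (n-1)) + (fun y : ℝ => b * ((n:ℝ)-1) * y ^ (n-2))) + (fun y : ℝ => c * ((n:ℝ)-2) * y ^ (n-3)) from rfl,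
    ((h1.add h2).add h3).deriv, show n-1-1 = n-2 from by omega, show n-2-1 = n-3 from by omega,
    show n-3-1 = n-4 from by omega, Nat.cast_sub (by omega : 1 ≤ n),
    Nat.cast_sub (by omega : 2 ≤ n), Nat.cast_sub (by omega : 3 ≤ n)]
  push_cast
  ring

lemma coeffs16 {n : ℕ} (hn : 5 ≤ n) (b c ε x₀ : ℝ)
    (h : ∀ x : ℝ, deriv (deriv (P16 n b c)) x =
      (n : ℝ) * ((n : ℝ) - 1) * x ^ (n - 4) * (x - x₀ + ε) * (x - x₀ - ε)) :
    b * ((n:ℝ)-2) = -2*(n:ℝ)*x₀ ∧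
      c * (((n:ℝ)-2)*((n:ℝ)-3)) = (n:ℝ)*((n:ℝ)-1)*(x₀^2-ε^2) := by
  set N := (n:ℝ) with hN
  have hN5 : (5:ℝ) ≤ N := by rw [hN]; exact_mod_cast hn
  have eq1 := h 1
  have eq2 := h 2
  rw [deriv2P16 hn] at eq1 eq2
  simp only [one_pow] at eq1
  rw [show n-2 = (n-4)+2 from by omega, show n-3 = (n-4)+1 from by omega, pow_add, pow_add,
    pow_one] at eq2
  norm_num at eq2
  have hp : ((2:ℝ)^(n-4)) ≠ 0 := by positivity
  have eq2' : 4*(N*(N-1)) + 2*(b*(N-1)*(N-2)) + c*(N-2)*(N-3)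
      = N*(N-1)*(2-x₀+ε)*(2-x₀-ε) := by
    apply mul_left_cancel₀ hp
    linear_combination eq2
  have hN1 : (N:ℝ)-1 ≠ 0 := by linarith
  have hb : b * (N-2) = -2*N*x₀ := by
    apply mul_left_cancel₀ hN1
    linear_combination eq2' - eq1
  refine ⟨hb, ?_⟩
  linear_combination eq1 - (N-1)*hb

lemma keyid16 {n : ℕ} (hn : 5 ≤ n) (b c ε x₀ : ℝ)
    (hb : b * ((n:ℝ)-2) = -2*(n:ℝ)*x₀)
    (hc : c * (((n:ℝ)-2)*((n:ℝ)-3)) = (n:ℝ)*((n:ℝ)-1)*(x₀^2-ε^2)) (x : ℝ) :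
    (((n:ℝ)-2)*((n:ℝ)-3)) * deriv (P16 n b c) x
      = (n:ℝ) * x^(n-3) * ((((n:ℝ)-2)*((n:ℝ)-3))*x^2 - 2*((n:ℝ)-1)*((n:ℝ)-3)*x₀*x
          + ((n:ℝ)-1)*((n:ℝ)-2)*(x₀^2-ε^2)) := by
  set N := (n:ℝ)
  rw [derivP16 hn, show n-1 = (n-3)+2 from by omega, show n-2 = (n-3)+1 from by omega,
    pow_add, pow_add, pow_one]
  linear_combination ((N-1)*(N-3)*x^(n-3)*x) * hb + ((N-2)*x^(n-3)) * hc

lemma deriv3P16 {n : ℕ} (b c ε x₀ : ℝ)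
    (h : ∀ x : ℝ, deriv (deriv (P16 n b c)) x =
      (n : ℝ) * ((n : ℝ) - 1) * x ^ (n - 4) * (x - x₀ + ε) * (x - x₀ - ε)) (y : ℝ) :
    deriv (deriv (deriv (P16 n b c))) y =
      ((n:ℝ)*((n:ℝ)-1) * (((n-4:ℕ):ℝ) * y^(n-4-1)) * (y - x₀ + ε)
        + (n:ℝ)*((n:ℝ)-1)*y^(n-4) * 1) * (y - x₀ - ε)
        + (n:ℝ)*((n:ℝ)-1)*y^(n-4) * (y - x₀ + ε) * 1 := by
  have hfun : deriv (deriv (P16 n b c)) = fun x : ℝ =>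
      (n : ℝ) * ((n : ℝ) - 1) * x ^ (n - 4) * (x - x₀ + ε) * (x - x₀ - ε) := funext h
  rw [hfun]
  have hA : HasDerivAt (fun x : ℝ => x - x₀ + ε) 1 y := by
    simpa using ((hasDerivAt_id y).sub_const x₀).add_const ε
  have hB : HasDerivAt (fun x : ℝ => x - x₀ - ε) 1 y := by
    simpa using ((hasDerivAt_id y).sub_const x₀).sub_const ε
  have hp : HasDerivAt (fun x : ℝ => (n:ℝ)*((n:ℝ)-1) * x^(n-4))
      ((n:ℝ)*((n:ℝ)-1) * (((n-4:ℕ):ℝ) * y^(n-4-1))) y :=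
    (hasDerivAt_pow (n-4) y).const_mul _
  exact (((hp.mul hA).mul hB)).deriv

set_option maxHeartbeats 800000 in
/-- Polynomial root-separation lemma: if `P(x) = xⁿ + b x^{n−1} + c x^{n−2}` satisfies
`P''(x) = n(n−1)x^{n−4}(x−x₀+ε)(x−x₀−ε)` with `x₀ ∼ 1`, then (a) for `|ε|` sufficiently
small, `|P'| ∼ 1` on a neighbourhood of `x₀` independent of `ε`; (b) if `|ε| > c₂` and
`x₀ ∓ ε ∼ 1` then `|P'''(x₀ ∓ ε)| ∼_{c₂} 1`. -/
theorem stmt_16 (n : ℕ) (hn : 5 ≤ n) (r₁ r₂ : ℝ) (hr₁ : 0 < r₁) (hr₁₂ : r₁ ≤ r₂) :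
    (∃ c₁ > (0 : ℝ), ∃ δ > (0 : ℝ), ∃ d₁ > (0 : ℝ), ∃ d₂ : ℝ,
      ∀ b c ε x₀ : ℝ, r₁ ≤ |x₀| → |x₀| ≤ r₂ →
        (∀ x : ℝ, deriv (deriv (P16 n b c)) x =
          (n : ℝ) * ((n : ℝ) - 1) * x ^ (n - 4) * (x - x₀ + ε) * (x - x₀ - ε)) →
        |ε| ≤ c₁ →
        ∀ x : ℝ, |x - x₀| ≤ δ →
          d₁ ≤ |deriv (P16 n b c) x| ∧ |deriv (P16 n b c) x| ≤ d₂) ∧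
    (∀ c₂ : ℝ, 0 < c₂ → ∀ r₁' r₂' : ℝ, 0 < r₁' → r₁' ≤ r₂' →
      ∃ d₁ > (0 : ℝ), ∃ d₂ : ℝ,
        ∀ b c ε x₀ : ℝ, r₁ ≤ |x₀| → |x₀| ≤ r₂ →
          (∀ x : ℝ, deriv (deriv (P16 n b c)) x =
            (n : ℝ) * ((n : ℝ) - 1) * x ^ (n - 4) * (x - x₀ + ε) * (x - x₀ - ε)) →
          c₂ < |ε| →
          ((r₁' ≤ |x₀ - ε| → |x₀ - ε| ≤ r₂' →
              d₁ ≤ |deriv (deriv (deriv (P16 n b c))) (x₀ - ε)| ∧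
                |deriv (deriv (deriv (P16 n b c))) (x₀ - ε)| ≤ d₂) ∧
            (r₁' ≤ |x₀ + ε| → |x₀ + ε| ≤ r₂' →
              d₁ ≤ |deriv (deriv (deriv (P16 n b c))) (x₀ + ε)| ∧
                |deriv (deriv (deriv (P16 n b c))) (x₀ + ε)| ≤ d₂))) := by
  have hN5 : (5:ℝ) ≤ (n:ℝ) := by exact_mod_cast hn
  set N := (n:ℝ) with hNdef
  have hNpos : (0:ℝ) < N := by linarith
  have hr₂ : 0 < r₂ := lt_of_lt_of_le hr₁ hr₁₂
  have hK : (0:ℝ) < (N-2)*(N-3) := by nlinarith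
  have hN2 : (25:ℝ) ≤ N^2 := by nlinarith
  constructor
  · -- part (a)
    refine ⟨r₁ / N, by positivity, r₁^2 / (2*N^2*(4*r₂+r₁)), by positivity,
      N * (r₁/2)^(n-3) * (r₁^2/2) / ((N-2)*(N-3)), div_pos (by positivity) hK,
      N * (2*r₂)^(n-3) * (4*r₂^2) / ((N-2)*(N-3)), ?_⟩
    intro b c ε x₀ hx0l hx0u h hε x hx
    obtain ⟨hb, hc⟩ := coeffs16 hn b c ε x₀ h
    have key := keyid16 hn b c ε x₀ hb hc x
    set G := ((N-2)*(N-3))*x^2 - 2*(N-1)*(N-3)*x₀*x + (N-1)*(N-2)*(x₀^2-ε^2) with hGdef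
    set δ := r₁^2 / (2*N^2*(4*r₂+r₁)) with hδdef
    have hδpos : 0 < δ := by positivity
    have hδ2 : δ ≤ r₁/2 := by
      rw [hδdef, div_le_div_iff₀ (by positivity) two_pos]
      have hkey2 : r₁ ≤ N^2*(4*r₂+r₁) := by
        nlinarith [mul_nonneg (by linarith : (0:ℝ) ≤ 4*r₂+r₁) (by linarith : (0:ℝ) ≤ N^2 - 25)]
      nlinarith [mul_le_mul_of_nonneg_left hkey2 hr₁.le]
    have hxl : r₁/2 ≤ |x| := by
      have h1 := abs_sub_abs_le_abs_sub x₀ x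
      rw [abs_sub_comm] at h1
      linarith
    have hxu : |x| ≤ 2*r₂ := by
      have h1 := abs_sub_abs_le_abs_sub x x₀
      linarith
    have hεNN : (N-1)*(N-2)*ε^2 ≤ r₁^2 := by
      have h1 : N*|ε| ≤ r₁ := by rw [← le_div_iff₀' hNpos]; exact hε
      have h2 : (N*|ε|)^2 ≤ r₁^2 :=
        pow_le_pow_left₀ (mul_nonneg hNpos.le (abs_nonneg ε)) h1 2
      have h3 : (N*|ε|)^2 = N^2*ε^2 := by rw [mul_pow, sq_abs]
      nlinarith [mul_nonneg (by linarith : (0:ℝ) ≤ 3*N-2) (sq_nonneg ε)]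
    have hx0sq : r₁^2 ≤ x₀^2 := by
      have := pow_le_pow_left₀ hr₁.le hx0l 2
      rwa [sq_abs] at this
    have hx0squ : x₀^2 ≤ r₂^2 := by
      have := pow_le_pow_left₀ (abs_nonneg x₀) hx0u 2
      rwa [sq_abs] at this
    have hΔ : |(x-x₀)*(((N-2)*(N-3))*(x+x₀) - 2*(N-1)*(N-3)*x₀)| ≤ r₁^2/2 := by
      rw [abs_mul]
      have hsum : |x+x₀| ≤ r₁/2 + 2*r₂ := by
        rw [show x+x₀ = (x-x₀)+2*x₀ from by ring]
        calc |(x-x₀)+2*x₀| ≤ |x-x₀| + |2*x₀| := abs_add_le _ _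
          _ = |x-x₀| + 2*|x₀| := by rw [abs_mul, abs_two]
          _ ≤ r₁/2 + 2*r₂ := by linarith
      have hco : |((N-2)*(N-3))*(x+x₀) - 2*(N-1)*(N-3)*x₀| ≤ N^2*(4*r₂+r₁) := by
        calc |((N-2)*(N-3))*(x+x₀) - 2*(N-1)*(N-3)*x₀|
            ≤ |((N-2)*(N-3))*(x+x₀)| + |2*(N-1)*(N-3)*x₀| := abs_sub _ _
          _ = ((N-2)*(N-3))*|x+x₀| + 2*(N-1)*(N-3)*|x₀| := by
              simp only [abs_mul]
              rw [abs_two, abs_of_nonneg (show (0:ℝ) ≤ N-1 by linarith),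
                abs_of_nonneg (show (0:ℝ) ≤ N-2 by linarith),
                abs_of_nonneg (show (0:ℝ) ≤ N-3 by linarith)]
          _ ≤ N^2*(4*r₂+r₁) := by nlinarith [abs_nonneg (x+x₀), abs_nonneg x₀]
      calc |x-x₀| * |((N-2)*(N-3))*(x+x₀) - 2*(N-1)*(N-3)*x₀|
          ≤ δ * (N^2*(4*r₂+r₁)) := mul_le_mul hx hco (abs_nonneg _) hδpos.le
        _ = r₁^2/2 := by
            rw [hδdef]
            field_simp
    have hGdec : G - (2*x₀^2 - (N-1)*(N-2)*ε^2)
        = (x-x₀)*(((N-2)*(N-3))*(x+x₀) - 2*(N-1)*(N-3)*x₀) := by rw [hGdef]; ring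
    obtain ⟨hΔl, hΔu⟩ := abs_le.mp hΔ
    have hnn2 : (0:ℝ) ≤ (N-1)*(N-2)*ε^2 :=
      mul_nonneg (mul_nonneg (by linarith) (by linarith)) (sq_nonneg ε)
    have hr12sq : r₁^2 ≤ r₂^2 := by nlinarith
    have hGl : r₁^2/2 ≤ G := by linarith
    have hGu : G ≤ 4*r₂^2 := by linarith
    have hGnn : (0:ℝ) ≤ G := le_trans (by positivity) hGl
    have habs : ((N-2)*(N-3)) * |deriv (P16 n b c) x| = N * |x|^(n-3) * G := by
      rw [show ((N-2)*(N-3)) * |deriv (P16 n b c) x| = |((N-2)*(N-3)) * deriv (P16 n b c) x|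
        from by rw [abs_mul, abs_of_nonneg hK.le], key, abs_mul, abs_mul, abs_pow,
        abs_of_nonneg hNpos.le, abs_of_nonneg hGnn]
    have hpowl : (r₁/2)^(n-3) ≤ |x|^(n-3) := pow_le_pow_left₀ (by linarith) hxl _
    have hpowu : |x|^(n-3) ≤ (2*r₂)^(n-3) := pow_le_pow_left₀ (abs_nonneg x) hxu _
    constructor
    · rw [div_le_iff₀ hK, mul_comm _ ((N-2)*(N-3)), habs]
      exact mul_le_mul (mul_le_mul_of_nonneg_left hpowl hNpos.le) hGl (by positivity)
        (by positivity)
    · rw [le_div_iff₀ hK, mul_comm _ ((N-2)*(N-3)), habs]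
      exact mul_le_mul (mul_le_mul_of_nonneg_left hpowu hNpos.le) hGu hGnn
        (mul_nonneg hNpos.le (pow_nonneg (by linarith) _))
  · -- part (b)
    intro c₂ hc₂ r₁' r₂' hr₁' hr₁₂'
    have hr₂' : 0 < r₂' := lt_of_lt_of_le hr₁' hr₁₂'
    have hNN : (0:ℝ) ≤ 2*(N*(N-1)) := by nlinarith
    have hNNpos : (0:ℝ) < 2*(N*(N-1)) := by nlinarith
    refine ⟨2*(N*(N-1))*c₂*r₁'^(n-4),
      mul_pos (mul_pos hNNpos hc₂) (pow_pos hr₁' _),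
      2*(N*(N-1))*(r₂+r₂')*r₂'^(n-4), ?_⟩
    intro b c ε x₀ hx0l hx0u h hε
    constructor
    · intro h1 h2
      rw [deriv3P16 b c ε x₀ h (x₀-ε),
        show ((n:ℝ)*((n:ℝ)-1) * (((n-4:ℕ):ℝ) * (x₀-ε)^(n-4-1)) * ((x₀-ε) - x₀ + ε)
            + (n:ℝ)*((n:ℝ)-1)*(x₀-ε)^(n-4) * 1) * ((x₀-ε) - x₀ - ε)
            + (n:ℝ)*((n:ℝ)-1)*(x₀-ε)^(n-4) * ((x₀-ε) - x₀ + ε) * 1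
          = -(2*(N*(N-1))*ε*(x₀-ε)^(n-4)) from by rw [hNdef]; ring,
        abs_neg, abs_mul, abs_mul, abs_pow, abs_of_nonneg hNN]
      have hεu : |ε| ≤ r₂ + r₂' := by
        have h3 := abs_sub x₀ (x₀ - ε)
        simp only [sub_sub_cancel] at h3
        linarith
      constructor
      · exact mul_le_mul (mul_le_mul_of_nonneg_left hε.le hNN)
          (pow_le_pow_left₀ hr₁'.le h1 _) (pow_nonneg hr₁'.le _)
          (mul_nonneg hNN (abs_nonneg ε))
      · exact mul_le_mul (mul_le_mul_of_nonneg_left hεu hNN)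
          (pow_le_pow_left₀ (abs_nonneg _) h2 _) (pow_nonneg (abs_nonneg _) _)
          (mul_nonneg hNN (by linarith : (0:ℝ) ≤ r₂+r₂'))
    · intro h1 h2
      rw [deriv3P16 b c ε x₀ h (x₀+ε),
        show ((n:ℝ)*((n:ℝ)-1) * (((n-4:ℕ):ℝ) * (x₀+ε)^(n-4-1)) * ((x₀+ε) - x₀ + ε)
            + (n:ℝ)*((n:ℝ)-1)*(x₀+ε)^(n-4) * 1) * ((x₀+ε) - x₀ - ε)
            + (n:ℝ)*((n:ℝ)-1)*(x₀+ε)^(n-4) * ((x₀+ε) - x₀ + ε) * 1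
          = 2*(N*(N-1))*ε*(x₀+ε)^(n-4) from by rw [hNdef]; ring,
        abs_mul, abs_mul, abs_pow, abs_of_nonneg hNN]
      have hεu : |ε| ≤ r₂ + r₂' := by
        have h3 := abs_sub (x₀ + ε) x₀
        simp only [add_sub_cancel_left] at h3
        linarith
      constructor
      · exact mul_le_mul (mul_le_mul_of_nonneg_left hε.le hNN)
          (pow_le_pow_left₀ hr₁'.le h1 _) (pow_nonneg hr₁'.le _)
          (mul_nonneg hNN (abs_nonneg ε))
      · exact mul_le_mul (mul_le_mul_of_nonneg_left hεu hNN)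
          (pow_le_pow_left₀ (abs_nonneg _) h2 _) (pow_nonneg (abs_nonneg _) _)
          (mul_nonneg hNN (by linarith : (0:ℝ) ≤ r₂+r₂'))
end
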